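/- arXiv:1611.05352 — 2 statements merged into one kernel-verified Lean document; each statement's English description precedes it below -/
import Mathlib

section
/- The function X ↦ h^H (H X H^H + c I)^{-1} h, defined on Hermitian positive semidefinite matrices X, is convex: for PSD X₁, X₂ and t ∈ [0,1], g(t X₁ + (1−t) X₂) ≤ t g(X₁) + (1−t) g(X₂), where g(X) = h^H (H X H^H + c I)^{-1} h. -/
/-!
For positive definite `A`, completing the square in `(y - A⁻¹ h)ᴴ A (y - A⁻¹ h) ≥ 0` gives
`Re (hᴴ A⁻¹ h) = max_y (2 Re (hᴴ y) - Re (yᴴ A y))`, attained at `y = A⁻¹ h`. As a pointwise maximum of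
functions affine in `A`, the map `A ↦ Re (hᴴ A⁻¹ h)` is convex on positive definite matrices; and
`X ↦ H X Hᴴ + c I` is affine and sends positive semidefinite matrices to positive definite ones.
-/

open Matrix RCLike
open scoped ComplexOrder

namespace Matrix

variable {𝕜 n : Type*} [RCLike 𝕜]

lemma convex_setOf_posDef : Convex ℝ {A : Matrix n n 𝕜 | A.PosDef} := by
  intro A hA B hB a b ha hb hab
  rcases ha.eq_or_lt with rfl | ha
  · simpa [show b = 1 by linarith] using hB
  · exact (hA.smul ha).add_posSemidef (hB.posSemidef.smul hb)

variable [Fintype n] [DecidableEq n]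

lemma re_dotProduct_inv_mulVec_eq {A : Matrix n n 𝕜} (hA : IsUnit A.det) (h : n → 𝕜) :
    re (star h ⬝ᵥ A⁻¹ *ᵥ h) =
      2 * re (star h ⬝ᵥ A⁻¹ *ᵥ h) - re (star (A⁻¹ *ᵥ h) ⬝ᵥ A *ᵥ (A⁻¹ *ᵥ h)) := by
  rw [mulVec_mulVec, mul_nonsing_inv A hA, one_mulVec, star_dotProduct, RCLike.star_def, conj_re]
  ring

lemma PosDef.two_mul_re_dotProduct_sub_le {A : Matrix n n 𝕜} (hA : A.PosDef) (h y : n → 𝕜) :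
    2 * re (star h ⬝ᵥ y) - re (star y ⬝ᵥ A *ᵥ y) ≤ re (star h ⬝ᵥ A⁻¹ *ᵥ h) := by
  have hdet := (isUnit_iff_isUnit_det A).mp hA.isUnit
  set w := A⁻¹ *ᵥ h
  have hAw : A *ᵥ w = h := by
    rw [mulVec_mulVec, mul_nonsing_inv A hdet, one_mulVec]
  have hwA : ∀ v, star w ⬝ᵥ A *ᵥ v = star h ⬝ᵥ v := fun v => by
    rw [star_mulVec, ← dotProduct_mulVec, mulVec_mulVec, hA.isHermitian.inv, nonsing_inv_mul A hdet,
      one_mulVec]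
  have hyh : re (star y ⬝ᵥ h) = re (star h ⬝ᵥ y) := by
    rw [star_dotProduct, RCLike.star_def, conj_re]
  have hsq := hA.posSemidef.dotProduct_mulVec_nonneg (y - w)
  rw [mulVec_sub, star_sub, sub_dotProduct, dotProduct_sub, dotProduct_sub, hwA, hwA, hAw] at hsq
  have hsq_re := (RCLike.nonneg_iff.mp hsq).1
  simp only [map_sub, hyh] at hsq_re
  linarith

theorem convexOn_re_dotProduct_inv_mulVec (h : n → 𝕜) :
    ConvexOn ℝ {A : Matrix n n 𝕜 | A.PosDef} fun A => re (star h ⬝ᵥ A⁻¹ *ᵥ h) := by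
  refine ⟨convex_setOf_posDef, fun A hA B hB a b ha hb hab => ?_⟩
  have hC : (a • A + b • B).PosDef := convex_setOf_posDef hA hB ha hb hab
  set y := (a • A + b • B)⁻¹ *ᵥ h
  have hsplit : re (star y ⬝ᵥ (a • A + b • B) *ᵥ y) =
      a * re (star y ⬝ᵥ A *ᵥ y) + b * re (star y ⬝ᵥ B *ᵥ y) := by
    simp [add_mulVec, smul_mulVec, dotProduct_smul, dotProduct_add, RCLike.smul_re]
  calc re (star h ⬝ᵥ (a • A + b • B)⁻¹ *ᵥ h)
      = 2 * re (star h ⬝ᵥ y) - re (star y ⬝ᵥ (a • A + b • B) *ᵥ y) :=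
        re_dotProduct_inv_mulVec_eq ((isUnit_iff_isUnit_det _).mp hC.isUnit) h
    _ = a * (2 * re (star h ⬝ᵥ y) - re (star y ⬝ᵥ A *ᵥ y)) +
        b * (2 * re (star h ⬝ᵥ y) - re (star y ⬝ᵥ B *ᵥ y)) := by
        rw [hsplit]
        linear_combination (2 * re (star h ⬝ᵥ y)) * hab.symm
    _ ≤ a • re (star h ⬝ᵥ A⁻¹ *ᵥ h) + b • re (star h ⬝ᵥ B⁻¹ *ᵥ h) := by
        simp only [smul_eq_mul]
        gcongr
        exacts [hA.two_mul_re_dotProduct_sub_le h y, hB.two_mul_re_dotProduct_sub_le h y]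

end Matrix

/-- Convexity of `X ↦ hᴴ (H X Hᴴ + c I)⁻¹ h` on PSD matrices. -/
theorem convexity_inverse_quadratic {n m : Type*} [Fintype n] [Fintype m] [DecidableEq n]
    (H : Matrix n m ℂ) (h : n → ℂ) (c : ℝ) (hc : 0 < c)
    (X₁ X₂ : Matrix m m ℂ) (hX₁ : X₁.PosSemidef) (hX₂ : X₂.PosSemidef)
    (t : ℝ) (ht0 : 0 ≤ t) (ht1 : t ≤ 1) :
    (star h ⬝ᵥ (H * ((t : ℂ) • X₁ + ((1 - t : ℝ) : ℂ) • X₂) * Hᴴ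
        + (c : ℂ) • (1 : Matrix n n ℂ))⁻¹.mulVec h).re
      ≤ t * (star h ⬝ᵥ (H * X₁ * Hᴴ + (c : ℂ) • (1 : Matrix n n ℂ))⁻¹.mulVec h).re
        + (1 - t) * (star h ⬝ᵥ (H * X₂ * Hᴴ + (c : ℂ) • (1 : Matrix n n ℂ))⁻¹.mulVec h).re := by
  set C : Matrix n n ℂ := (c : ℂ) • 1
  have hC : C.PosDef := by simpa [C] using PosDef.one.smul hc
  have hA : ∀ {X : Matrix m m ℂ}, X.PosSemidef → (H * X * Hᴴ + C).PosDef := fun hX =>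
    PosDef.posSemidef_add (hX.mul_mul_conjTranspose_same H) hC
  have hcomb : H * ((t : ℂ) • X₁ + ((1 - t : ℝ) : ℂ) • X₂) * Hᴴ + C =
      t • (H * X₁ * Hᴴ + C) + (1 - t) • (H * X₂ * Hᴴ + C) := by
    simp only [Complex.coe_smul, Matrix.mul_add, Matrix.add_mul, Matrix.mul_smul, Matrix.smul_mul]
    module
  rw [hcomb]
  simpa using (convexOn_re_dotProduct_inv_mulVec h).2 (hA hX₁) (hA hX₂) ht0 (sub_nonneg.2 ht1)
    (add_sub_cancel t 1)
end

section
/- The function ρ ↦ (1−ρ)·h^H((1−ρ)(M + σ_a² I) + σ_c² I)^{−1} h is monotonically non-increasing on [0,1), where M is a fixed Hermitian positive semidefinite matrix and σ_a², σ_c² > 0. -/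
/-!
With `B = M + σ_a² I ⪰ 0` one has `(1 - ρ) A(ρ)⁻¹ = (B + σ_c² / (1 - ρ) I)⁻¹`. Inversion is
antitone in the Loewner order on positive definite matrices, so `s ↦ hᴴ (B + s I)⁻¹ h` is
non-increasing for `s > 0`, and `σ_c² / (1 - ρ)` increases with `ρ`.
-/

open Matrix
-- The L2 operator norm makes `Matrix n n ℂ` a C⋆-algebra, where operator antitonicity of the
-- inverse is available.
open scoped ComplexOrder MatrixOrder Matrix.Norms.L2Operator

namespace Matrix

variable {n : Type*}

theorem PosSemidef.posDef_add_smul_one [DecidableEq n] {B : Matrix n n ℂ} (hB : B.PosSemidef)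
    {c : ℝ} (hc : 0 < c) : (B + (c : ℂ) • 1).PosDef :=
  PosDef.posSemidef_add hB (PosDef.one.smul (Complex.zero_lt_real.mpr hc))

variable [Fintype n]

theorem dotProduct_mulVec_mono {𝕜 : Type*} [RCLike 𝕜] {A B : Matrix n n 𝕜} (hAB : A ≤ B)
    (x : n → 𝕜) : star x ⬝ᵥ A *ᵥ x ≤ star x ⬝ᵥ B *ᵥ x := by
  have := (le_iff.mp hAB).dotProduct_mulVec_nonneg x
  rwa [sub_mulVec, dotProduct_sub, sub_nonneg] at this

theorem re_dotProduct_mulVec_mono {A B : Matrix n n ℂ} (hAB : A ≤ B) (x : n → ℂ) :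
    (star x ⬝ᵥ A *ᵥ x).re ≤ (star x ⬝ᵥ B *ᵥ x).re :=
  (Complex.le_def.mp (dotProduct_mulVec_mono hAB x)).1

variable [DecidableEq n]

theorem inv_smul_of_ne_zero {K : Type*} [Field K] (A : Matrix n n K) {k : K} (hk : k ≠ 0) :
    (k • A)⁻¹ = k⁻¹ • A⁻¹ := by
  by_cases hA : IsUnit A.det
  · exact inv_smul' A (Units.mk0 k hk) hA
  · have hkA : ¬IsUnit (k • A).det := by simpa [det_smul, hk] using hA
    rw [nonsing_inv_apply_not_isUnit _ hA, nonsing_inv_apply_not_isUnit _ hkA, smul_zero]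

theorem smul_inv_smul_add_smul_one {K : Type*} [Field K] (B : Matrix n n K) {t : K} (ht : t ≠ 0)
    (c : K) : t • (t • B + c • 1)⁻¹ = (B + (c / t) • 1)⁻¹ := by
  rw [show t • B + c • (1 : Matrix n n K) = t • (B + (c / t) • 1) by
      rw [smul_add, smul_smul, mul_div_cancel₀ _ ht],
    inv_smul_of_ne_zero _ ht, smul_inv_smul₀ ht]

theorem PosSemidef.inv_add_smul_one_antitoneOn {B : Matrix n n ℂ} (hB : B.PosSemidef) :
    AntitoneOn (fun s : ℝ => (B + (s : ℂ) • 1)⁻¹) (Set.Ioi 0) := by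
  intro s₁ hs₁ s₂ _ hs
  simp only [nonsing_inv_eq_ringInverse]
  refine CStarAlgebra.ringInverse_le_ringInverse ?_
    (hB.posDef_add_smul_one hs₁).isStrictlyPositive
  gcongr
  exact Complex.real_le_real.mpr hs

end Matrix

/-- `ρ ↦ (1−ρ) hᴴ ((1−ρ)(M + σₐ²I) + σ_c²I)⁻¹ h` is non-increasing on `[0,1)`. -/
theorem ps_factor_antitone {n : Type*} [Fintype n] [DecidableEq n]
    (M : Matrix n n ℂ) (hM : M.PosSemidef) (h : n → ℂ)
    (sa sc : ℝ) (hsa : 0 < sa) (hsc : 0 < sc) :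
    AntitoneOn (fun ρ : ℝ =>
      (1 - ρ) * (star h ⬝ᵥ (((1 - ρ : ℝ) : ℂ) • (M + (sa : ℂ) • (1 : Matrix n n ℂ))
        + (sc : ℂ) • (1 : Matrix n n ℂ))⁻¹.mulVec h).re)
      (Set.Ico (0 : ℝ) 1) := by
  set B := M + (sa : ℂ) • (1 : Matrix n n ℂ)
  have hB : B.PosSemidef := (hM.posDef_add_smul_one hsa).posSemidef
  have hf : ∀ ρ < 1, (1 - ρ) * (star h ⬝ᵥ (((1 - ρ : ℝ) : ℂ) • B + (sc : ℂ) • 1)⁻¹ *ᵥ h).re =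
      (star h ⬝ᵥ (B + ((sc / (1 - ρ) : ℝ) : ℂ) • 1)⁻¹ *ᵥ h).re := by
    intro ρ hρ
    have hne : ((1 - ρ : ℝ) : ℂ) ≠ 0 := Complex.ofReal_ne_zero.mpr (sub_ne_zero.mpr hρ.ne')
    rw [Complex.ofReal_div, ← smul_inv_smul_add_smul_one B hne, smul_mulVec, dotProduct_smul,
      smul_eq_mul, Complex.re_ofReal_mul]
  rintro ρ₁ ⟨-, hρ₁⟩ ρ₂ ⟨-, hρ₂⟩ hρ
  have h₁ : 0 < 1 - ρ₁ := sub_pos.mpr hρ₁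
  have h₂ : 0 < 1 - ρ₂ := sub_pos.mpr hρ₂
  simp only [hf ρ₁ hρ₁, hf ρ₂ hρ₂]
  refine re_dotProduct_mulVec_mono
    (hB.inv_add_smul_one_antitoneOn (div_pos hsc h₁) (div_pos hsc h₂) ?_) h
  gcongr
end
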